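/- In the augmented drawing Γ' built from a plane graph G by crossing each edge with a fresh pendant edge, G has a vertex cover of size at most k if and only if Γ' has a vertex deletion set of size at most k whose removal leaves a planar drawing. -/
import Mathlib


/-- The augmented drawing `Γ'`: the graph `G` together with, for each edge
`e` of `G`, a fresh pendant "crossing edge" with two new degree-1 endpoints
`(e,0)` and `(e,1)`. -/
def augGraph {V : Type} (G : SimpleGraph V) : SimpleGraph (V ⊕ (Sym2 V × Fin 2)) :=
  SimpleGraph.fromRel fun a b =>
    match a, b with
    | Sum.inl u, Sum.inl w => G.Adj u w
    | Sum.inr p, Sum.inr q => p.1 = q.1 ∧ p.1 ∈ G.edgeSet ∧ p.2 ≠ q.2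
    | _, _ => False

/-- The crossing structure of the drawing `Γ'`: the crossing edge of `e`
crosses exactly the edge `e`, and nothing else crosses. -/
def Crosses {V : Type} (G : SimpleGraph V)
    (p q : Sym2 (V ⊕ (Sym2 V × Fin 2))) : Prop :=
  ∃ e ∈ G.edgeSet,
    (p = e.map Sum.inl ∧ q = s(Sum.inr (e, 0), Sum.inr (e, 1))) ∨
    (q = e.map Sum.inl ∧ p = s(Sum.inr (e, 0), Sum.inr (e, 1)))

/-- Deleting the vertex set `D` (with all incident edges) from `Γ'` leaves a
crossing-free (planar) drawing. -/
def PlanarAfterDelete {V : Type} (G : SimpleGraph V)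
    (D : Set (V ⊕ (Sym2 V × Fin 2))) : Prop :=
  ∀ p ∈ (augGraph G).edgeSet, ∀ q ∈ (augGraph G).edgeSet,
    (∀ x ∈ p, x ∉ D) → (∀ x ∈ q, x ∉ D) → ¬ Crosses G p q

/-- `G` has a vertex cover of size at most `k` iff the augmented drawing `Γ'`
has a vertex deletion set of size at most `k` whose removal leaves a planar
drawing. -/
theorem stmt5 {V : Type} [Fintype V] (G : SimpleGraph V) (k : ℕ) :
    (∃ C : Set V, C.ncard ≤ k ∧ ∀ e ∈ G.edgeSet, ∃ x ∈ e, x ∈ C) ↔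
    (∃ D : Set (V ⊕ (Sym2 V × Fin 2)), D.ncard ≤ k ∧ PlanarAfterDelete G D) := by
  classical
  constructor
  · rintro ⟨C, hCk, hcov⟩
    refine ⟨Sum.inl '' C, ?_, ?_⟩
    · rwa [Set.ncard_image_of_injective _ Sum.inl_injective]
    · rintro p hp q hq hpD hqD ⟨e, he, hcr⟩
      obtain ⟨x, hxe, hxC⟩ := hcov e he
      rcases hcr with ⟨hpe, hqe⟩ | ⟨hqe, hpe⟩
      · exact hpD (Sum.inl x) (by rw [hpe, Sym2.mem_map]; exact ⟨x, hxe, rfl⟩)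
          ⟨x, hxC, rfl⟩
      · exact hqD (Sum.inl x) (by rw [hqe, Sym2.mem_map]; exact ⟨x, hxe, rfl⟩)
          ⟨x, hxC, rfl⟩
  · rintro ⟨D, hDk, hplan⟩
    refine ⟨(fun d => match d with
      | Sum.inl x => x
      | Sum.inr (e, _) => e.out.1) '' D,
      le_trans (Set.ncard_image_le D.toFinite) hDk, ?_⟩
    intro e he
    have hp : e.map Sum.inl ∈ (augGraph G).edgeSet := by
      induction e using Sym2.ind with
      | _ u v =>
        rw [Sym2.map_pair_eq, SimpleGraph.mem_edgeSet]
        have hadj : G.Adj u v := (SimpleGraph.mem_edgeSet G).mp he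
        exact ⟨fun h => hadj.ne (Sum.inl.inj h), Or.inl hadj⟩
    have hq : s(Sum.inr (e, 0), Sum.inr (e, 1)) ∈ (augGraph G).edgeSet := by
      rw [SimpleGraph.mem_edgeSet]
      exact ⟨by simp, Or.inl ⟨rfl, he, (by decide : (0:Fin 2) ≠ 1)⟩⟩
    by_contra hno
    push_neg at hno
    refine hplan _ hp _ hq ?_ ?_ ⟨e, he, Or.inl ⟨rfl, rfl⟩⟩
    · intro x hx hxD
      rw [Sym2.mem_map] at hx
      obtain ⟨a, hae, rfl⟩ := hx
      exact hno a hae ⟨Sum.inl a, hxD, rfl⟩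
    · intro x hx hxD
      have hm : e.out.1 ∈ e := e.out_fst_mem
      rcases Sym2.mem_iff.mp hx with rfl | rfl
      · exact hno _ hm ⟨Sum.inr (e, 0), hxD, rfl⟩
      · exact hno _ hm ⟨Sum.inr (e, 1), hxD, rfl⟩
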